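/- In the setting of an exact 3-separation (A, B) with a freely added guts line L: if A′ ⊆ A and B′ ⊆ B satisfy ⊓(A′ ∪ B′, L) = 1 = ⊓(B′, L), and A′ contains a special strand, then B′ also contains a special strand (where special strands are those lying in the component of the strand graph containing a fixed pair A₀, B₀ with ⊓(A₀, B₀) = 1). -/

import Mathlib

open Set

variable {α : Type*}

/-- The rank of a set in a matroid: the supremum of cardinalities of independent subsets. -/
noncomputable def mRk (M : Matroid α) (X : Set α) : ℕ :=
  sSup (Set.ncard '' {I | M.Indep I ∧ I ⊆ X})

/-- Local connectivity `⊓(S, T) = r(S) + r(T) − r(S ∪ T)`. -/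
noncomputable def mConn (M : Matroid α) (S T : Set α) : ℤ :=
  (mRk M S : ℤ) + (mRk M T : ℤ) - (mRk M (S ∪ T) : ℤ)

/-- A circuit: a minimal dependent set. -/
def mCircuit (M : Matroid α) (C : Set α) : Prop :=
  M.Dep C ∧ ∀ D, D ⊂ C → ¬ M.Dep D

/-- `M'` is a single-element extension of `M` by the element `p`:
`p` is a new element, the ground set grows by `p`, and deleting `p` recovers `M`. -/
def ExtBy (M' M : Matroid α) (p : α) : Prop :=
  p ∉ M.E ∧ M'.E = insert p M.E ∧ M'.restrict M.E = M

/-- `M'` is an extension of `M` by the two new elements `x` and `y`. -/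
def ExtBy2 (M' M : Matroid α) (x y : α) : Prop :=
  x ∉ M.E ∧ y ∉ M.E ∧ x ≠ y ∧ M'.E = insert x (insert y M.E) ∧ M'.restrict M.E = M

/-- `(A, B)` is an exact 3-separation of `M`: a partition of the ground set with
`r(A) + r(B) − r(M) = 2`. -/
def Exact3Sep (M : Matroid α) (A B : Set α) : Prop :=
  Disjoint A B ∧ A ∪ B = M.E ∧
    (mRk M A : ℤ) + (mRk M B : ℤ) - (mRk M M.E : ℤ) = 2

/-- An `A`-strand relative to the separation `(A, B)`: a minimal subset `S` of `A` with
`⊓(S, B) = 1`. -/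
def Strand (M : Matroid α) (A B S : Set α) : Prop :=
  S ⊆ A ∧ mConn M S B = 1 ∧ ∀ S', S' ⊂ S → mConn M S' B ≠ 1

/-- `e` and `f` are clones: interchanging them is an automorphism of `M`. -/
def mClones [DecidableEq α] (M : Matroid α) (e f : α) : Prop :=
  M.mapEquiv (Equiv.swap e f) = M

/-- `e` and `f` are independent clones. -/
def mIndepClones [DecidableEq α] (M : Matroid α) (e f : α) : Prop :=
  mClones M e f ∧ M.Indep {e, f}

/-- `z` is fixed in `M`: there is no extension of `M` by an element `z'` in which
`z` and `z'` are independent clones. -/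
def mFixed [DecidableEq α] (M : Matroid α) (z : α) : Prop :=
  ¬ ∃ (M' : Matroid α) (z' : α), ExtBy M' M z' ∧ mIndepClones M' z z'

/-- `M''` is obtained from `M` by freely adding the independent clones `x` and `y`
to the guts line of the separation `(A, B)`. -/
def GutsPairExt [DecidableEq α] (M'' M : Matroid α) (A B : Set α) (x y : α) : Prop :=
  ExtBy2 M'' M x y ∧ mIndepClones M'' x y ∧
    ({x, y} : Set α) ⊆ M''.closure A ∩ M''.closure B

/-- Contraction of the set `C` from `M`, defined by duality. -/
noncomputable def mContract (M : Matroid α) (C : Set α) : Matroid α :=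
  (M.dual.restrict (M.E \ C)).dual

/-- `S` is a separator of the matroid `N`. -/
def mSeparator (N : Matroid α) (S : Set α) : Prop :=
  (mRk N S : ℤ) + (mRk N (N.E \ S) : ℤ) = (mRk N N.E : ℤ)

/-- Adjacency in the strand graph of `(M, A, B)`: a strand on one side is adjacent to a
strand on the other side when their local connectivity is one. -/
def StrandAdj (M : Matroid α) (A B : Set α) (S T : Set α) : Prop :=
  ((Strand M A B S ∧ Strand M B A T) ∨ (Strand M B A S ∧ Strand M A B T)) ∧ mConn M S T = 1

/-- Exactly two of the three integers are equal to one. -/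
def ExactlyTwoOne (a b c : ℤ) : Prop :=
  (a = 1 ∧ b = 1 ∧ c ≠ 1) ∨ (a = 1 ∧ c = 1 ∧ b ≠ 1) ∨ (b = 1 ∧ c = 1 ∧ a ≠ 1)

/-! The guts line `P = {x, y}` carries all the connectivity between `A` and `B`: for `Z ⊆ A`
one has `⊓(Z, B) = ⊓(Z, P)`, so the `A`-strands are the minimal subsets of `A` with `⊓(·, P) = 1`,
and symmetrically for `B`. Moreover, for `Z ⊆ A` and `W ⊆ B` of finite rank,
`⊓(Z, W) + ⊓(Z ∪ W, P) = ⊓(Z, P) + ⊓(W, P)`.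

Let `S ⊆ A'` be a special strand and `T ⊆ B'` minimal with `⊓(T, P) = 1`; then `T` is a
`B`-strand. As `⊓(·, P)` is monotone, `1 = ⊓(T, P) ≤ ⊓(S ∪ T, P) ≤ ⊓(A' ∪ B', P) = 1`, and the
identity gives `⊓(S, T) = 1`, so `T` is adjacent to `S` in the strand graph. -/

namespace Matroid

variable {M : Matroid α} {X Y Z P R : Set α}

lemma mRk_eq_toNat_eRk (M : Matroid α) (X : Set α) : mRk M X = (M.eRk X).toNat := by
  obtain ⟨I, hI⟩ := M.exists_isBasis' X
  by_cases hX : M.IsRkFinite X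
  · have hmax : IsGreatest (Set.ncard '' {J | M.Indep J ∧ J ⊆ X}) I.ncard := by
      refine ⟨⟨I, ⟨hI.indep, hI.subset⟩, rfl⟩, ?_⟩
      rintro _ ⟨J, ⟨hJ, hJX⟩, rfl⟩
      rw [ncard_def, ncard_def, hI.encard_eq_eRk]
      exact ENat.toNat_le_toNat (hJ.encard_le_eRk_of_subset hJX) (eRk_ne_top_iff.2 hX)
    rw [mRk, hmax.csSup_eq, ncard_def, hI.encard_eq_eRk]
  · have hIinf : I.Infinite := fun hI' => hX (hI.isRkFinite_of_finite hI')
    have hunbdd : ¬ BddAbove (Set.ncard '' {J | M.Indep J ∧ J ⊆ X}) := by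
      rintro ⟨n, hn⟩
      obtain ⟨J, hJI, -, hJ⟩ := hIinf.exists_subset_ncard_eq (n + 1)
      have := hn ⟨J, ⟨hI.indep.subset hJI, hJI.trans hI.subset⟩, hJ⟩
      omega
    rw [mRk, csSup_of_not_bddAbove hunbdd, csSup_empty, eRk_eq_top_iff.2 hX]
    rfl

lemma IsRkFinite.cast_mRk (h : M.IsRkFinite X) : (mRk M X : ℕ∞) = M.eRk X := by
  rw [mRk_eq_toNat_eRk, ENat.natCast_toNat (eRk_ne_top_iff.2 h)]

lemma mRk_of_not_isRkFinite (h : ¬ M.IsRkFinite X) : mRk M X = 0 := by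
  rw [mRk_eq_toNat_eRk, eRk_eq_top_iff.2 h, ENat.toNat_top]

lemma isRkFinite_of_mRk_ne_zero (h : mRk M X ≠ 0) : M.IsRkFinite X :=
  not_imp_comm.1 mRk_of_not_isRkFinite h

lemma mRk_congr (h : M.closure X = M.closure Y) : mRk M X = mRk M Y := by
  rw [mRk_eq_toNat_eRk, mRk_eq_toNat_eRk, ← eRk_closure_eq, h, eRk_closure_eq]

lemma mRk_union_of_subset_closure (h : Y ⊆ M.closure X) : mRk M (X ∪ Y) = mRk M X :=
  mRk_congr <| by rw [← closure_union_closure_left_eq, union_eq_self_of_subset_right h,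
    closure_closure]

lemma mRk_restrict (h : X ⊆ R) : mRk (M ↾ R) X = mRk M X := by
  rw [mRk_eq_toNat_eRk, mRk_eq_toNat_eRk, restrict_eRk_eq _ h]

lemma mRk_add_mRk_union_le_of_subset_inter (hX : M.IsRkFinite X) (hY : M.IsRkFinite Y)
    (hZ : Z ⊆ X ∩ Y) : mRk M Z + mRk M (X ∪ Y) ≤ mRk M X + mRk M Y := by
  have hZf : M.IsRkFinite Z := hX.subset (hZ.trans inter_subset_left)
  suffices (mRk M Z : ℕ∞) + mRk M (X ∪ Y) ≤ mRk M X + mRk M Y by exact_mod_cast this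
  rw [hZf.cast_mRk, (hX.union hY).cast_mRk, hX.cast_mRk, hY.cast_mRk]
  calc M.eRk Z + M.eRk (X ∪ Y) ≤ M.eRk (X ∩ Y) + M.eRk (X ∪ Y) := by gcongr; exact M.eRk_mono hZ
    _ ≤ M.eRk X + M.eRk Y := M.eRk_inter_add_eRk_union_le X Y

lemma mConn_comm (M : Matroid α) (X Y : Set α) : mConn M X Y = mConn M Y X := by
  rw [mConn, mConn, union_comm]
  ring

lemma mConn_congr_left (h : M.closure X = M.closure Y) : mConn M X P = mConn M Y P := by
  have hXP : M.closure (X ∪ P) = M.closure (Y ∪ P) := by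
    rw [← closure_union_closure_left_eq, h, closure_union_closure_left_eq]
  rw [mConn, mConn, mRk_congr h, mRk_congr hXP]

lemma mConn_closure_right (M : Matroid α) (X Y : Set α) :
    mConn M X (M.closure Y) = mConn M X Y := by
  rw [mConn_comm, mConn_congr_left (closure_closure M Y), mConn_comm]

lemma mConn_restrict (hX : X ⊆ R) (hY : Y ⊆ R) : mConn (M ↾ R) X Y = mConn M X Y := by
  rw [mConn, mConn, mRk_restrict hX, mRk_restrict hY, mRk_restrict (union_subset hX hY)]

lemma isRkFinite_of_mConn_eq_one (h : mConn M X Y = 1) (hY : mRk M Y ≠ 1) :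
    M.IsRkFinite X := by
  by_contra hX
  have hXY : ¬ M.IsRkFinite (X ∪ Y) := fun h' => hX (h'.subset subset_union_left)
  rw [mConn, mRk_of_not_isRkFinite hX, mRk_of_not_isRkFinite hXY] at h
  omega

lemma mConn_le_mConn_of_subset (hXY : X ⊆ Y) (hY : M.IsRkFinite Y) (hP : M.IsRkFinite P) :
    mConn M X P ≤ mConn M Y P := by
  have hsub := mRk_add_mRk_union_le_of_subset_inter hY ((hY.subset hXY).union hP)
    (subset_inter hXY subset_union_left)
  rw [← union_assoc, union_eq_self_of_subset_right hXY] at hsub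
  rw [mConn, mConn]
  omega

lemma exists_strand_of_mConn_eq_one (h : mConn M X P = 1) (hP : mRk M P ≠ 1) :
    ∃ T, Strand M X P T := by
  obtain ⟨I, hI, hIfin⟩ := (isRkFinite_of_mConn_eq_one h hP).exists_finite_isBasis'
  set s := {T | T ⊆ I ∧ mConn M T P = 1}
  have hs : s.Finite := hIfin.finite_subsets.subset fun T hT => hT.1
  obtain ⟨T, -, hT⟩ := hs.isPWO.exists_le_minimal
    (show I ∈ s from ⟨Subset.rfl, (mConn_congr_left hI.closure_eq_closure).trans h⟩)
  exact ⟨T, hT.prop.1.trans hI.subset, hT.prop.2,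
    fun T' hT' hT'P => hT.not_prop_of_lt hT' ⟨hT'.subset.trans hT.prop.1, hT'P⟩⟩

lemma strand_restrict_iff {A B S : Set α} (hA : A ⊆ R) (hB : B ⊆ R) :
    Strand (M ↾ R) A B S ↔ Strand M A B S := by
  refine and_congr_right fun hS => ?_
  rw [mConn_restrict (hS.trans hA) hB]
  exact and_congr_right fun _ => forall₂_congr fun S' hS' => by
    rw [mConn_restrict ((hS'.subset.trans hS).trans hA) hB]

structure IsGutsLine (N : Matroid α) (A B P : Set α) : Prop where
  left_subset_ground : A ⊆ N.E
  right_subset_ground : B ⊆ N.E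
  subset_closure_left : P ⊆ N.closure A
  subset_closure_right : P ⊆ N.closure B
  mRk_eq : mRk N P = 2
  mConn_eq : mConn N A B = 2

namespace IsGutsLine

variable {N : Matroid α} {A B P Z W : Set α}

lemma symm (hG : IsGutsLine N A B P) : IsGutsLine N B A P :=
  ⟨hG.2, hG.1, hG.4, hG.3, hG.5, by rw [mConn_comm]; exact hG.6⟩

lemma isRkFinite (hG : IsGutsLine N A B P) : N.IsRkFinite P :=
  isRkFinite_of_mRk_ne_zero (by rw [hG.mRk_eq]; norm_num)

/- `mRk` is `0` on sets of infinite rank, so the separation equation allows one side to have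
infinite rank; the other side then has rank two and is spanned by the guts line. -/
lemma mRk_right_eq_two_of_not_isRkFinite (hG : IsGutsLine N A B P)
    (hA : ¬ N.IsRkFinite A) : mRk N B = 2 := by
  have hAB : ¬ N.IsRkFinite (A ∪ B) := fun h => hA (h.subset subset_union_left)
  have h := hG.mConn_eq
  rw [mConn, mRk_of_not_isRkFinite hA, mRk_of_not_isRkFinite hAB] at h
  omega

lemma closure_right_eq_of_not_isRkFinite (hG : IsGutsLine N A B P)
    (hA : ¬ N.IsRkFinite A) : N.closure B = N.closure P := by
  have hB2 := hG.mRk_right_eq_two_of_not_isRkFinite hA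
  have hB : N.IsRkFinite B := isRkFinite_of_mRk_ne_zero (by omega)
  rw [hG.isRkFinite.closure_eq_closure_of_subset_of_eRk_ge_eRk hG.subset_closure_right,
    closure_closure]
  rw [eRk_closure_eq, ← hB.cast_mRk, ← hG.isRkFinite.cast_mRk, hB2, hG.mRk_eq]

lemma mConn_right_eq (hG : IsGutsLine N A B P) (hZ : Z ⊆ A) : mConn N Z B = mConn N Z P := by
  by_cases hB : N.IsRkFinite B
  swap
  · have hZP : Z ⊆ N.closure P := by
      rw [← hG.symm.closure_right_eq_of_not_isRkFinite hB]
      exact N.subset_closure_of_subset hZ hG.left_subset_ground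
    have hZB : ¬ N.IsRkFinite (Z ∪ B) := fun h => hB (h.subset subset_union_right)
    rw [mConn, mConn, mRk_of_not_isRkFinite hB, mRk_of_not_isRkFinite hZB, union_comm,
      mRk_union_of_subset_closure hZP, hG.mRk_eq]
    ring
  by_cases hA : N.IsRkFinite A
  swap
  · rw [mConn_comm, mConn_congr_left (hG.closure_right_eq_of_not_isRkFinite hA), mConn_comm]
  have hP := hG.isRkFinite
  have hZf := hA.subset hZ
  have hsep := hG.mConn_eq
  have hle := mRk_add_mRk_union_le_of_subset_inter (hZf.union hP) (hB.union hP)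
    (subset_inter subset_union_right subset_union_right)
  have hge := mRk_add_mRk_union_le_of_subset_inter (hA.union hP) ((hZf.union hB).union hP)
    (subset_inter (union_subset_union_left P hZ) (union_subset_union_left P subset_union_left))
  rw [← union_union_distrib_right] at hle hge
  rw [← union_assoc, union_eq_self_of_subset_right hZ] at hge
  have hPZB : P ⊆ N.closure (Z ∪ B) :=
    hG.subset_closure_right.trans (N.closure_subset_closure subset_union_right)
  have hPAB : P ⊆ N.closure (A ∪ B) :=
    hG.subset_closure_right.trans (N.closure_subset_closure subset_union_right)
  rw [mRk_union_of_subset_closure hPZB, mRk_union_of_subset_closure hG.subset_closure_right]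
    at hle
  rw [mRk_union_of_subset_closure hPAB, mRk_union_of_subset_closure hPZB,
    mRk_union_of_subset_closure hG.subset_closure_left] at hge
  simp only [mConn, hG.mRk_eq] at hsep hle ⊢
  omega

lemma strand_iff (hG : IsGutsLine N A B P) : Strand N A B Z ↔ Strand N A P Z := by
  refine and_congr_right fun hZ => ?_
  rw [hG.mConn_right_eq hZ]
  exact and_congr_right fun _ => forall₂_congr fun Z' hZ' => by
    rw [hG.mConn_right_eq (hZ'.subset.trans hZ)]

lemma mConn_add_mConn_union_of_isRkFinite (hG : IsGutsLine N A B P) (hB : N.IsRkFinite B)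
    (hZ : Z ⊆ A) (hW : W ⊆ B) (hZf : N.IsRkFinite Z) (hWf : N.IsRkFinite W) :
    mConn N Z W + mConn N (Z ∪ W) P = mConn N Z P + mConn N W P := by
  have hP := hG.isRkFinite
  have hguts := hG.mConn_right_eq hZ
  have hle := mRk_add_mRk_union_le_of_subset_inter (hZf.union hP) (hWf.union hP)
    (subset_inter subset_union_right subset_union_right)
  have hge := mRk_add_mRk_union_le_of_subset_inter ((hZf.union hWf).union hP) (hB.union hP)
    (subset_inter (union_subset_union_left P subset_union_right) (union_subset_union_left P hW))
  rw [← union_union_distrib_right] at hle hge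
  rw [union_assoc Z W B, union_eq_self_of_subset_left hW] at hge
  have hPZB : P ⊆ N.closure (Z ∪ B) :=
    hG.subset_closure_right.trans (N.closure_subset_closure subset_union_right)
  rw [mRk_union_of_subset_closure hPZB, mRk_union_of_subset_closure hG.subset_closure_right]
    at hge
  simp only [mConn, hG.mRk_eq] at hguts hle ⊢
  omega

lemma mConn_add_mConn_union (hG : IsGutsLine N A B P)
    (hZ : Z ⊆ A) (hW : W ⊆ B) (hZf : N.IsRkFinite Z) (hWf : N.IsRkFinite W) :
    mConn N Z W + mConn N (Z ∪ W) P = mConn N Z P + mConn N W P := by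
  by_cases hB : N.IsRkFinite B
  · exact hG.mConn_add_mConn_union_of_isRkFinite hB hZ hW hZf hWf
  have hA : N.IsRkFinite A :=
    isRkFinite_of_mRk_ne_zero (by rw [hG.symm.mRk_right_eq_two_of_not_isRkFinite hB]; norm_num)
  rw [mConn_comm N Z W, union_comm, add_comm (mConn N Z P)]
  exact hG.symm.mConn_add_mConn_union_of_isRkFinite hA hW hZ hWf hZf

end IsGutsLine

end Matroid

open Matroid

lemma GutsPairExt.isGutsLine [DecidableEq α] {M M'' : Matroid α} {A B : Set α} {x y : α}
    (hguts : GutsPairExt M'' M A B x y) (hsep : Exact3Sep M A B) :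
    IsGutsLine M'' A B {x, y} := by
  obtain ⟨⟨-, -, hxy, hE, hres⟩, ⟨-, hind⟩, hxyAB⟩ := hguts
  obtain ⟨-, hU, hrk⟩ := hsep
  have hME : M.E ⊆ M''.E := hE ▸ (subset_insert _ _).trans (subset_insert _ _)
  refine ⟨(hU ▸ subset_union_left).trans hME, (hU ▸ subset_union_right).trans hME,
    fun e he => (hxyAB he).1, fun e he => (hxyAB he).2, ?_, ?_⟩
  · rw [mRk_eq_toNat_eRk, hind.eRk_eq_encard, encard_pair hxy]
    rfl
  · rw [← mConn_restrict (R := M.E) (hU ▸ subset_union_left) (hU ▸ subset_union_right), hres,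
      mConn, hU, hrk]

theorem special_strand_transfer_general [DecidableEq α] (M M'' : Matroid α) (A B A₀ : Set α)
    (x y : α) (L : Set α)
    (hsep : Exact3Sep M A B)
    (hguts : GutsPairExt M'' M A B x y) (hL : L = M''.closure {x, y})
    (A' B' : Set α) (hB' : B' ⊆ B)
    (h1 : mConn M'' (A' ∪ B') L = 1) (h2 : mConn M'' B' L = 1)
    (hspecial : ∃ S, S ⊆ A' ∧ Strand M A B S ∧
      Relation.ReflTransGen (StrandAdj M A B) A₀ S) :
    ∃ T, T ⊆ B' ∧ Strand M B A T ∧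
      Relation.ReflTransGen (StrandAdj M A B) A₀ T := by
  have hG := hguts.isGutsLine hsep
  have hres : M'' ↾ M.E = M := hguts.1.2.2.2.2
  have hAE : A ⊆ M.E := hsep.2.1 ▸ subset_union_left
  have hBE : B ⊆ M.E := hsep.2.1 ▸ subset_union_right
  have hP : mRk M'' {x, y} ≠ 1 := by rw [hG.mRk_eq]; norm_num
  rw [hL, mConn_closure_right] at h1 h2
  obtain ⟨S, hSA', hS, hpath⟩ := hspecial
  have hS' : Strand M'' A {x, y} S := by
    rwa [← hG.strand_iff, ← strand_restrict_iff hAE hBE, hres]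
  obtain ⟨T, hT⟩ := exists_strand_of_mConn_eq_one h2 hP
  have hTB : T ⊆ B := hT.1.trans hB'
  have hTstrand : Strand M B A T := by
    rw [← hres, strand_restrict_iff hBE hAE, hG.symm.strand_iff]
    exact ⟨hTB, hT.2⟩
  have hfin := isRkFinite_of_mConn_eq_one h1 hP
  have hSTsub : S ∪ T ⊆ A' ∪ B' := union_subset_union hSA' hT.1
  have hST : mConn M'' (S ∪ T) {x, y} = 1 := le_antisymm
    (h1 ▸ mConn_le_mConn_of_subset hSTsub hfin hG.isRkFinite)
    (hT.2.1 ▸ mConn_le_mConn_of_subset subset_union_right (hfin.subset hSTsub) hG.isRkFinite)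
  have hadd := hG.mConn_add_mConn_union hS'.1 hTB (hfin.subset (subset_union_left.trans hSTsub))
    (hfin.subset (subset_union_right.trans hSTsub))
  refine ⟨T, hT.1, hTstrand, hpath.tail ⟨Or.inl ⟨hS, hTstrand⟩, ?_⟩⟩
  rw [← hres, mConn_restrict (hS'.1.trans hAE) (hTB.trans hBE)]
  linarith [hS'.2.1, hT.2.1]

/-- If `⊓(A' ∪ B', L) = 1 = ⊓(B', L)` and `A'` contains a special strand, then `B'` contains
a special strand, where special strands are those in the strand-graph component of `A₀`. -/
theorem special_strand_transfer [DecidableEq α] (M M'' : Matroid α) (A B A₀ B₀ : Set α)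
    (x y : α) (L : Set α)
    (hsep : Exact3Sep M A B)
    (hA₀ : Strand M A B A₀) (hB₀ : Strand M B A B₀) (hconn : mConn M A₀ B₀ = 1)
    (hguts : GutsPairExt M'' M A B x y) (hL : L = M''.closure {x, y})
    (A' B' : Set α) (hA' : A' ⊆ A) (hB' : B' ⊆ B)
    (h1 : mConn M'' (A' ∪ B') L = 1) (h2 : mConn M'' B' L = 1)
    (hspecial : ∃ S, S ⊆ A' ∧ Strand M A B S ∧
      Relation.ReflTransGen (StrandAdj M A B) A₀ S) :
    ∃ T, T ⊆ B' ∧ Strand M B A T ∧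
      Relation.ReflTransGen (StrandAdj M A B) A₀ T :=
  special_strand_transfer_general M M'' A B A₀ x y L hsep hguts hL A' B' hB' h1 h2 hspecial
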